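/- arXiv:1811.00675 — 3 statements merged into one kernel-verified Lean document; each statement's English description precedes it below -/
import Mathlib

section
/- Let N ≥ 2 be an integer and for s ∈ [0, 1] let A(s) be the real 2×2 matrix A(s) = [[(1−s)(N−1)/N, (s−1)(N−1)/N^{3/2}], [(s−1)/√N, (1−s+sN)/N]]. Then for every s ∈ [0, 1] the quantity 1 − 4((N−1)/N)s(1−s) is strictly positive, and the eigenvalues of A(s) are exactly λ₋(s) = (1 − √(1 − 4((N−1)/N)s(1−s)))/2 and λ₊(s) = (1 + √(1 − 4((N−1)/N)s(1−s)))/2; in particular the spectral gap is g(s) = λ₊(s) − λ₋(s) = √(1 − 4((N−1)/N)s(1−s)). -/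
/-!
The matrix `A(s)` has trace `1` and determinant `c s (1 - s)` with `c = (N - 1)/N`, so its
characteristic polynomial is `λ² - λ + c s (1 - s)`, whose discriminant `1 - 4 c s (1 - s)` is at
least `1 - c > 0` because `4 s (1 - s) ≤ 1`. The eigenvalues are then the two roots given by the
quadratic formula, and they differ by the square root of the discriminant.
-/

open Polynomial

theorem Matrix.spectrum_fin_two_of_discr_nonneg (M : Matrix (Fin 2) (Fin 2) ℝ)
    (h : 0 ≤ M.trace ^ 2 - 4 * M.det) :
    spectrum ℝ M =
      {(M.trace - √(M.trace ^ 2 - 4 * M.det)) / 2, (M.trace + √(M.trace ^ 2 - 4 * M.det)) / 2} := by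
  have hdiscrim : discrim 1 (-M.trace) M.det =
      √(M.trace ^ 2 - 4 * M.det) * √(M.trace ^ 2 - 4 * M.det) := by
    rw [Real.mul_self_sqrt h, discrim]
    ring
  ext μ
  rw [Matrix.mem_spectrum_iff_isRoot_charpoly, Matrix.charpoly_fin_two, IsRoot.def]
  simp only [eval_add, eval_sub, eval_mul, eval_pow, eval_X, eval_C, Set.mem_insert_iff,
    Set.mem_singleton_iff]
  simpa only [one_mul, mul_one, neg_mul, neg_neg, ← sub_eq_add_neg, ← sq, or_comm] using
    quadratic_eq_zero_iff one_ne_zero hdiscrim μ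

noncomputable def groverMatrix (N s : ℝ) : Matrix (Fin 2) (Fin 2) ℝ :=
  !![(1 - s) * (N - 1) / N, (s - 1) * (N - 1) / (N * √N);
     (s - 1) / √N, (1 - s + s * N) / N]

theorem groverMatrix_trace {N : ℝ} (hN : N ≠ 0) (s : ℝ) : (groverMatrix N s).trace = 1 := by
  rw [groverMatrix, Matrix.trace_fin_two_of]
  field_simp
  ring

theorem groverMatrix_det {N : ℝ} (hN : 0 < N) (s : ℝ) :
    (groverMatrix N s).det = (N - 1) / N * s * (1 - s) := by
  have hsqrt_ne : √N ≠ 0 := (Real.sqrt_pos.mpr hN).ne'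
  rw [groverMatrix, Matrix.det_fin_two_of]
  field_simp
  rw [Real.sq_sqrt hN.le]
  ring

theorem one_sub_four_mul_mul_one_sub_pos {c : ℝ} (hc₀ : 0 ≤ c) (hc₁ : c < 1) (s : ℝ) :
    0 < 1 - 4 * c * s * (1 - s) := by
  nlinarith [mul_nonneg hc₀ (sq_nonneg (2 * s - 1))]

/-- for `s ∈ [0,1]`, `1 - 4((N-1)/N)s(1-s) > 0` and the eigenvalues of the
restricted Grover Hamiltonian matrix `A(s)` are exactly
`λ∓(s) = (1 ∓ √(1 - 4((N-1)/N)s(1-s)))/2`; the spectral gap is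
`λ₊(s) - λ₋(s) = √(1 - 4((N-1)/N)s(1-s))`. -/
theorem stmt_5 (N : ℕ) (hN : 2 ≤ N)
    (A : ℝ → Matrix (Fin 2) (Fin 2) ℝ)
    (hA : ∀ s : ℝ, A s =
      !![(1 - s) * (N - 1) / N, (s - 1) * (N - 1) / (N * Real.sqrt N);
         (s - 1) / Real.sqrt N, (1 - s + s * N) / N]) :
    ∀ s ∈ Set.Icc (0 : ℝ) 1,
      0 < 1 - 4 * (((N : ℝ) - 1) / N) * s * (1 - s) ∧
      spectrum ℝ (A s) =
        {(1 - Real.sqrt (1 - 4 * (((N : ℝ) - 1) / N) * s * (1 - s))) / 2,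
         (1 + Real.sqrt (1 - 4 * (((N : ℝ) - 1) / N) * s * (1 - s))) / 2} ∧
      (1 + Real.sqrt (1 - 4 * (((N : ℝ) - 1) / N) * s * (1 - s))) / 2 -
        (1 - Real.sqrt (1 - 4 * (((N : ℝ) - 1) / N) * s * (1 - s))) / 2 =
        Real.sqrt (1 - 4 * (((N : ℝ) - 1) / N) * s * (1 - s)) := by
  intro s _
  have hN₂ : (2 : ℝ) ≤ N := by exact_mod_cast hN
  have hN₀ : (0 : ℝ) < N := by linarith
  have hdiscr : 0 < 1 - 4 * (((N : ℝ) - 1) / N) * s * (1 - s) :=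
    one_sub_four_mul_mul_one_sub_pos (div_nonneg (by linarith) hN₀.le)
      ((div_lt_one hN₀).mpr (by linarith)) s
  have hdiscr_eq : (groverMatrix N s).trace ^ 2 - 4 * (groverMatrix N s).det =
      1 - 4 * (((N : ℝ) - 1) / N) * s * (1 - s) := by
    rw [groverMatrix_trace hN₀.ne', groverMatrix_det hN₀]
    ring
  refine ⟨hdiscr, ?_, by ring⟩
  rw [show A s = groverMatrix N s from hA s,
    Matrix.spectrum_fin_two_of_discr_nonneg _ (hdiscr_eq ▸ hdiscr.le), hdiscr_eq,
    groverMatrix_trace hN₀.ne']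
end

section
/- Let N ≥ 2 be an integer. Then ∫₀¹ ds / (1 − 4((N−1)/N)·s(1−s)) = (N/√(N−1)) · arctan(√(N−1)). (Here the integrand 1/g(s)², with g(s) the spectral gap, is everywhere defined since 1 − 4((N−1)/N)s(1−s) ≥ 1/N > 0 on [0,1].) -/
/-! Completing the square, `1 - 4((N-1)/N)s(1-s) = (1 + (N-1)(2s-1)²)/N`, turns the integrand into
`N / (1 + (k(2s-1))²)` with `k = √(N-1)`, which the substitution `x = k(2s-1)` integrates to
`N (arctan k - arctan (-k)) / (2k)`. -/

open Real intervalIntegral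

theorem integral_one_div_one_add_sq_mul_two_mul_sub_one {k : ℝ} (hk : k ≠ 0) :
    ∫ s in (0 : ℝ)..1, 1 / (1 + (k * (2 * s - 1)) ^ 2) = arctan k / k := by
  have hlin : ∀ s : ℝ, k * (2 * s - 1) = 2 * k * s + -k := fun s => by ring
  simp_rw [hlin]
  rw [integral_comp_mul_add (fun x => 1 / (1 + x ^ 2)) (mul_ne_zero two_ne_zero hk),
    integral_one_div_one_add_sq, mul_zero, zero_add, mul_one, show 2 * k + -k = k by ring,
    arctan_neg, smul_eq_mul]
  field_simp
  ring

theorem one_sub_four_mul_div_mul_mul_one_sub_eq {N : ℝ} (hN : 1 ≤ N) (s : ℝ) :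
    1 - 4 * ((N - 1) / N) * s * (1 - s) = (1 + (√(N - 1) * (2 * s - 1)) ^ 2) / N := by
  have hN0 : N ≠ 0 := by positivity
  rw [mul_pow, sq_sqrt (by linarith)]
  field_simp
  ring

/-- `∫₀¹ ds / (1 - 4((N-1)/N)s(1-s)) = (N/√(N-1)) · arctan √(N-1)`. -/
theorem stmt_7 (N : ℕ) (hN : 2 ≤ N) :
    ∫ s in (0 : ℝ)..1, 1 / (1 - 4 * (((N : ℝ) - 1) / N) * s * (1 - s)) =
      ((N : ℝ) / Real.sqrt ((N : ℝ) - 1)) * Real.arctan (Real.sqrt ((N : ℝ) - 1)) := by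
  have hN1 : (1 : ℝ) < N := by exact_mod_cast hN
  have hk : √((N : ℝ) - 1) ≠ 0 := (sqrt_pos.mpr (by linarith)).ne'
  simp_rw [one_sub_four_mul_div_mul_mul_one_sub_eq hN1.le, one_div_div, div_eq_mul_one_div (N : ℝ)]
  rw [integral_const_mul, integral_one_div_one_add_sq_mul_two_mul_sub_one hk]
  ring
end

section
/- Let a > 0 be a real number and define f : ℝ² → ℝ by f(s, λ) = a(s − s²) + λ² − λ. Then the total Gaussian curvature of the graph of f is exactly −2π: ∫_{ℝ²} (f_{ss}f_{λλ} − f_{sλ}²) / (1 + f_s² + f_λ²)^{3/2} ds dλ = −2π. (The integrand is K·√(1 + f_s² + f_λ²), i.e. the Gaussian curvature K = (f_{ss}f_{λλ} − f_{sλ}²)/(1 + f_s² + f_λ²)² times the area element of the graph.) -/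
/-!
The integrand is the constant Hessian determinant `f_ss f_λλ - f_sλ² = -4a` over
`(1 + f_s² + f_λ²)^{3/2}`, where `f_s = a - 2as` and `f_λ = 2λ - 1` are affine. Integrating
first in `λ` with the primitive `t / √(c + t²) / c` of `(c + t²)^{-3/2}` gives `1 / c` with
`c = 1 + f_s²`, and then `∫ (1 + (a - 2as)²)⁻¹ ds = π / (2a)`, so the total is
`-4a · π/(2a) = -2π`.
-/

open MeasureTheory Filter Topology

theorem Real.rpow_three_halves {x : ℝ} (hx : 0 ≤ x) : x ^ (3 / 2 : ℝ) = x * √x := by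
  rw [show (3 / 2 : ℝ) = 1 + 1 / 2 by norm_num, Real.rpow_add' hx (by norm_num), Real.rpow_one,
    Real.sqrt_eq_rpow]

theorem deriv_mul_add (α β x : ℝ) : deriv (fun t => α * t + β) x = α :=
  (((hasDerivAt_id' x).const_mul α).add_const β).deriv.trans (mul_one α)

theorem integral_comp_mul_add {E : Type*} [NormedAddCommGroup E] [NormedSpace ℝ E]
    (g : ℝ → E) (a b : ℝ) : ∫ x, g (a * x + b) = |a⁻¹| • ∫ x, g x := by
  rw [Measure.integral_comp_mul_left (fun x => g (x + b)), integral_add_right_eq_self]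

theorem integrable_of_hasDerivAt_of_nonneg_of_tendsto {f f' : ℝ → ℝ} {m M : ℝ}
    (hderiv : ∀ x, HasDerivAt f (f' x) x) (hcont : Continuous f') (hnonneg : ∀ x, 0 ≤ f' x)
    (hbot : Tendsto f atBot (𝓝 m)) (htop : Tendsto f atTop (𝓝 M)) : Integrable f' := by
  refine integrable_of_intervalIntegral_norm_tendsto (M - m) (fun i => hcont.integrableOn_Ioc)
    tendsto_neg_atTop_atBot tendsto_id ?_
  have hftc : ∀ i : ℝ, ∫ x in -i..id i, ‖f' x‖ = f i - f (-i) := fun i => by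
    simp only [Real.norm_of_nonneg (hnonneg _), id]
    exact intervalIntegral.integral_eq_sub_of_hasDerivAt (fun x _ => hderiv x)
      (hcont.intervalIntegrable _ _)
  simp only [hftc]
  exact htop.sub (hbot.comp tendsto_neg_atTop_atBot)

theorem tendsto_div_sqrt_add_sq_atTop (c : ℝ) :
    Tendsto (fun t : ℝ => t / √(c + t ^ 2)) atTop (𝓝 1) := by
  have hlim : Tendsto (fun t : ℝ => (√(c / t ^ 2 + 1))⁻¹) atTop (𝓝 1) := by
    have h : Tendsto (fun t : ℝ => c / t ^ 2 + 1) atTop (𝓝 (0 + 1)) :=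
      (tendsto_const_nhds.div_atTop (tendsto_pow_atTop two_ne_zero)).add_const 1
    simpa using ((Real.continuous_sqrt.tendsto _).comp h).inv₀ (by simp)
  refine hlim.congr' ?_
  filter_upwards [eventually_gt_atTop 0] with t ht
  have : c + t ^ 2 = t ^ 2 * (c / t ^ 2 + 1) := by field_simp
  rw [this, Real.sqrt_mul (sq_nonneg t), Real.sqrt_sq ht.le, div_mul_eq_div_div, div_self ht.ne',
    one_div]

theorem tendsto_div_sqrt_add_sq_atBot (c : ℝ) :
    Tendsto (fun t : ℝ => t / √(c + t ^ 2)) atBot (𝓝 (-1)) := by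
  refine ((tendsto_div_sqrt_add_sq_atTop c).comp tendsto_neg_atBot_atTop).neg.congr fun t => ?_
  simp [neg_div]

theorem hasDerivAt_div_sqrt_add_sq_div {c : ℝ} (hc : 0 < c) (t : ℝ) :
    HasDerivAt (fun t : ℝ => t / √(c + t ^ 2) / c) ((c + t ^ 2) ^ (3 / 2 : ℝ))⁻¹ t := by
  have hpos : 0 < c + t ^ 2 := by positivity
  have hsqrt : HasDerivAt (fun t : ℝ => √(c + t ^ 2)) (2 * t / (2 * √(c + t ^ 2))) t := by
    simpa using ((hasDerivAt_pow 2 t).const_add c).sqrt hpos.ne'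
  refine (((hasDerivAt_id' t).div hsqrt (by positivity)).div_const c).congr_deriv ?_
  rw [Real.rpow_three_halves hpos.le]
  have hsq := Real.sq_sqrt hpos.le
  field_simp
  linear_combination t ^ 2 * hsq

theorem integrable_inv_add_sq_rpow {c : ℝ} (hc : 0 < c) :
    Integrable fun t : ℝ => ((c + t ^ 2) ^ (3 / 2 : ℝ))⁻¹ :=
  integrable_of_hasDerivAt_of_nonneg_of_tendsto (hasDerivAt_div_sqrt_add_sq_div hc)
    (by fun_prop (disch := intros; positivity)) (fun t => by positivity)
    ((tendsto_div_sqrt_add_sq_atBot c).div_const c) ((tendsto_div_sqrt_add_sq_atTop c).div_const c)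

theorem integral_inv_add_sq_rpow {c : ℝ} (hc : 0 < c) :
    ∫ t : ℝ, ((c + t ^ 2) ^ (3 / 2 : ℝ))⁻¹ = 2 / c := by
  rw [integral_of_hasDerivAt_of_tendsto (hasDerivAt_div_sqrt_add_sq_div hc)
    (integrable_inv_add_sq_rpow hc) ((tendsto_div_sqrt_add_sq_atBot c).div_const c)
    ((tendsto_div_sqrt_add_sq_atTop c).div_const c)]
  ring

theorem integrable_inv_add_affine_sq_rpow {c γ : ℝ} (hc : 0 < c) (hγ : γ ≠ 0) (δ : ℝ) :
    Integrable fun t : ℝ => ((c + (γ * t + δ) ^ 2) ^ (3 / 2 : ℝ))⁻¹ :=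
  ((integrable_inv_add_sq_rpow hc).comp_add_right δ).comp_mul_left' hγ

theorem integral_inv_add_affine_sq_rpow {c : ℝ} (hc : 0 < c) (γ δ : ℝ) :
    ∫ t : ℝ, ((c + (γ * t + δ) ^ 2) ^ (3 / 2 : ℝ))⁻¹ = 2 * |γ|⁻¹ * c⁻¹ := by
  rw [integral_comp_mul_add (fun t => ((c + t ^ 2) ^ (3 / 2 : ℝ))⁻¹),
    integral_inv_add_sq_rpow hc, smul_eq_mul, abs_inv]
  ring

theorem integrable_inv_one_add_sq_add_sq_rpow {α γ : ℝ} (hα : α ≠ 0) (hγ : γ ≠ 0) (β δ : ℝ) :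
    Integrable fun p : ℝ × ℝ => ((1 + (α * p.1 + β) ^ 2 + (γ * p.2 + δ) ^ 2) ^ (3 / 2 : ℝ))⁻¹ := by
  have hmeas : AEStronglyMeasurable
      (fun p : ℝ × ℝ => ((1 + (α * p.1 + β) ^ 2 + (γ * p.2 + δ) ^ 2) ^ (3 / 2 : ℝ))⁻¹) :=
    (by fun_prop (disch := intros; positivity) : Continuous _).aestronglyMeasurable
  rw [Measure.volume_eq_prod] at hmeas ⊢
  refine (integrable_prod_iff hmeas).2 ⟨.of_forall fun x =>
    integrable_inv_add_affine_sq_rpow (c := 1 + (α * x + β) ^ 2) (by positivity) hγ δ, ?_⟩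
  have hnorm : ∀ x y : ℝ, ‖((1 + (α * x + β) ^ 2 + (γ * y + δ) ^ 2) ^ (3 / 2 : ℝ))⁻¹‖ =
      ((1 + (α * x + β) ^ 2 + (γ * y + δ) ^ 2) ^ (3 / 2 : ℝ))⁻¹ := fun x y =>
    Real.norm_of_nonneg (by positivity)
  simp only [hnorm, fun x =>
    integral_inv_add_affine_sq_rpow (c := 1 + (α * x + β) ^ 2) (by positivity) γ δ]
  exact ((integrable_inv_one_add_sq.comp_add_right β).comp_mul_left' hα).const_mul _

theorem integral_inv_one_add_sq_add_sq_rpow {α γ : ℝ} (hα : α ≠ 0) (hγ : γ ≠ 0) (β δ : ℝ) :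
    ∫ p : ℝ × ℝ, ((1 + (α * p.1 + β) ^ 2 + (γ * p.2 + δ) ^ 2) ^ (3 / 2 : ℝ))⁻¹
      = 2 * Real.pi / |α * γ| := by
  have h := integrable_inv_one_add_sq_add_sq_rpow hα hγ β δ
  rw [Measure.volume_eq_prod] at h ⊢
  rw [integral_prod _ h]
  simp only [fun x =>
    integral_inv_add_affine_sq_rpow (c := 1 + (α * x + β) ^ 2) (by positivity) γ δ]
  rw [integral_const_mul, integral_comp_mul_add (fun t => (1 + t ^ 2)⁻¹),
    integral_univ_inv_one_add_sq, smul_eq_mul, abs_mul, abs_inv]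
  field_simp

/-- for `f(s, λ) = a(s - s²) + λ² - λ` with `a > 0`, the total Gaussian
curvature of the graph of `f`, i.e. `∫_{ℝ²} (f_ss f_λλ - f_sλ²)/(1 + f_s² + f_λ²)^{3/2}`,
equals `-2π`. -/
theorem stmt_9 (a : ℝ) (ha : 0 < a)
    (f : ℝ → ℝ → ℝ)
    (hf : ∀ s lam : ℝ, f s lam = a * (s - s ^ 2) + lam ^ 2 - lam) :
    ∫ p : ℝ × ℝ,
      (deriv (fun t => deriv (fun t' => f t' p.2) t) p.1 *
         deriv (fun t => deriv (fun t' => f p.1 t') t) p.2 -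
       (deriv (fun t => deriv (fun t' => f t t') p.2) p.1) ^ 2) /
      (1 + (deriv (fun t => f t p.2) p.1) ^ 2 + (deriv (fun t => f p.1 t) p.2) ^ 2)
        ^ ((3 : ℝ) / 2) = -2 * Real.pi := by
  have f_s : ∀ s lam, deriv (fun t => f t lam) s = -(2 * a) * s + a := fun s lam => by
    simp only [hf]
    exact ((((hasDerivAt_id' s).sub (hasDerivAt_pow 2 s)).const_mul a).add_const _ |>.sub_const _
      |>.deriv).trans (by ring)
  have f_lam : ∀ s lam, deriv (fun t => f s t) lam = 2 * lam + -1 := fun s lam => by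
    simp only [hf]
    exact (((hasDerivAt_pow 2 lam).const_add _).sub (hasDerivAt_id' lam) |>.deriv).trans (by ring)
  simp only [f_s, f_lam, deriv_mul_add, deriv_const]
  -- only the numerator: a bare `div_eq_mul_inv` would also rewrite the exponent `3 / 2`
  simp_rw [div_eq_mul_inv (_ - _)]
  rw [integral_const_mul, integral_inv_one_add_sq_add_sq_rpow
    (neg_ne_zero.2 (mul_pos two_pos ha).ne') two_ne_zero, abs_of_neg (by linarith)]
  field_simp
  ring
end
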